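/- The Ricci tensor of the torsion-free affine connection on ℝ³ with nonzero Christoffel symbols ∇_{∂₁}∂₁ = x₁²∂₂, ∇_{∂₂}∂₂ = (x₁+x₂)∂₃, ∇_{∂₃}∂₃ = (x₂+x₃²)∂₁ is cyclic parallel, i.e., (∇_X Ric)(X,X) = 0 for all vector fields X. -/

import Mathlib

open scoped BigOperators

noncomputable section AffineSzabo

variable {ι : Type} [Fintype ι] [DecidableEq ι]

/-- Points of the coordinate chart. -/
abbrev Pt (ι : Type) := ι → ℝ
/-- Vector fields in coordinates. -/
abbrev VF (ι : Type) := Pt ι → Pt ι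
/-- Christoffel symbols `Γ p i j k = Γ^i_{jk}(p)` of a torsion-free affine connection. -/
abbrev Chr (ι : Type) := Pt ι → ι → ι → ι → ℝ

/-- Partial derivative in the `j`-th coordinate direction. -/
def pd (j : ι) (f : Pt ι → ℝ) (p : Pt ι) : ℝ :=
  fderiv ℝ f p (Pi.single j 1)

/-- The covariant derivative `∇_X Y` of the affine connection with Christoffel symbols `Γ`. -/
def conn (Γ : Chr ι) (X Y : VF ι) : VF ι :=
  fun p i => fderiv ℝ (fun q => Y q i) p (X p) + ∑ j, ∑ k, Γ p i j k * X p j * Y p k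

/-- The Lie bracket of vector fields. -/
def bracket (X Y : VF ι) : VF ι :=
  fun p i => fderiv ℝ (fun q => Y q i) p (X p) - fderiv ℝ (fun q => X q i) p (Y p)

/-- The curvature tensor `R(X,Y)Z = ∇_X∇_Y Z − ∇_Y∇_X Z − ∇_{[X,Y]}Z`. -/
def curv (Γ : Chr ι) (X Y Z : VF ι) : VF ι :=
  conn Γ X (conn Γ Y Z) - conn Γ Y (conn Γ X Z) - conn Γ (bracket X Y) Z

/-- The covariant derivative of the curvature tensor,
`(∇_X R)(Y,Z)W = ∇_X(R(Y,Z)W) − R(∇_X Y,Z)W − R(Y,∇_X Z)W − R(Y,Z)∇_X W`. -/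
def covCurv (Γ : Chr ι) (X Y Z W : VF ι) : VF ι :=
  conn Γ X (curv Γ Y Z W) - curv Γ (conn Γ X Y) Z W - curv Γ Y (conn Γ X Z) W
    - curv Γ Y Z (conn Γ X W)

/-- The affine Szabó operator `S(X)Y = (∇_X R)(Y,X)X`. -/
def szabo (Γ : Chr ι) (X Y : VF ι) : VF ι := covCurv Γ X Y X X

/-- The constant vector field extending a tangent vector `v`. -/
def cvf (v : Pt ι) : VF ι := fun _ => v

/-- The matrix of the affine Szabó operator `S(X)` at the point `p` with respect to the
tangent vector `X = v`, in the coordinate basis. -/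
def szaboMat (Γ : Chr ι) (p v : Pt ι) : Matrix ι ι ℝ :=
  Matrix.of fun i m => szabo Γ (cvf v) (cvf (Pi.single m 1)) p i

/-- The Ricci tensor `Ric(X,Y) = trace (Z ↦ R(Z,X)Y)`. -/
def ricci (Γ : Chr ι) (X Y : VF ι) (p : Pt ι) : ℝ :=
  ∑ i, curv Γ (cvf (Pi.single i 1)) X Y p i

/-- The covariant derivative of the Ricci tensor,
`(∇_X Ric)(Z,W) = X(Ric(Z,W)) − Ric(∇_X Z,W) − Ric(Z,∇_X W)`. -/
def covRic (Γ : Chr ι) (X Z W : VF ι) (p : Pt ι) : ℝ :=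
  fderiv ℝ (ricci Γ Z W) p (X p) - ricci Γ (conn Γ X Z) W p - ricci Γ Z (conn Γ X W) p

/-- A vector field is smooth if its components are smooth. -/
def SmoothVF (X : VF ι) : Prop := ∀ i, ContDiff ℝ (⊤ : ℕ∞) fun p => X p i

/-- A connection is smooth if its Christoffel symbols are smooth. -/
def SmoothChr (Γ : Chr ι) : Prop := ∀ i j k, ContDiff ℝ (⊤ : ℕ∞) fun p => Γ p i j k

/-- The Ricci tensor of `Γ` is cyclic parallel: `(∇_X Ric)(X,X) = 0` for all vector fields `X`. -/
def CyclicParallelRic (Γ : Chr ι) : Prop :=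
  ∀ X : VF ι, SmoothVF X → ∀ p, covRic Γ X X X p = 0

/-- The connection is affine Szabó: every affine Szabó operator is nilpotent. -/
def AffineSzabo (Γ : Chr ι) : Prop :=
  ∀ p v : Pt ι, IsNilpotent (szaboMat Γ p v)


/-- The connection of Case 2: `∇_{∂₁}∂₁ = f₁∂₂`, `∇_{∂₂}∂₂ = f₂∂₃`, `∇_{∂₃}∂₃ = f₃∂₁`,
all other Christoffel symbols zero. -/
def gammaB (f1 f2 f3 : Pt (Fin 3) → ℝ) : Chr (Fin 3) := fun p i j k =>
  if i = 1 ∧ j = 0 ∧ k = 0 then f1 p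
  else if i = 2 ∧ j = 1 ∧ k = 1 then f2 p
  else if i = 0 ∧ j = 2 ∧ k = 2 then f3 p
  else 0


section CyclicAux

local notation "Gex" => gammaB (fun p => (p 0 : ℝ) ^ 2) (fun p => p 0 + p 1)
  (fun p => p 1 + (p 2) ^ 2)

lemma gsum0 (f1 f2 f3 : Pt (Fin 3) → ℝ) :
    ∀ (q : Pt (Fin 3)) (u w : Fin 3 → ℝ),
      (∑ j, ∑ k, gammaB f1 f2 f3 q 0 j k * u j * w k) = f3 q * u 2 * w 2 := by
  intro q u w; simp [gammaB, Fin.sum_univ_three]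

lemma gsum1 (f1 f2 f3 : Pt (Fin 3) → ℝ) :
    ∀ (q : Pt (Fin 3)) (u w : Fin 3 → ℝ),
      (∑ j, ∑ k, gammaB f1 f2 f3 q 1 j k * u j * w k) = f1 q * u 0 * w 0 := by
  intro q u w; simp [gammaB, Fin.sum_univ_three]

lemma gsum2 (f1 f2 f3 : Pt (Fin 3) → ℝ) :
    ∀ (q : Pt (Fin 3)) (u w : Fin 3 → ℝ),
      (∑ j, ∑ k, gammaB f1 f2 f3 q 2 j k * u j * w k) = f2 q * u 1 * w 1 := by
  intro q u w; simp [gammaB, Fin.sum_univ_three]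

lemma curv_diag_zero (Γ : Chr (Fin 3)) (Z W : VF (Fin 3)) (hZ : SmoothVF Z) (hW : SmoothVF W)
    (i b c : Fin 3) (g g' : Pt (Fin 3) → ℝ) (hg : ContDiff ℝ (⊤ : ℕ∞) g)
    (hrowi : ∀ q (u w : Fin 3 → ℝ), (∑ j, ∑ k, Γ q i j k * u j * w k) = g q * u b * w b)
    (hrowb : ∀ q (u w : Fin 3 → ℝ), (∑ j, ∑ k, Γ q b j k * u j * w k) = g' q * u c * w c)
    (hib : (Pi.single i 1 : Pt (Fin 3)) b = 0) (hic : (Pi.single i 1 : Pt (Fin 3)) c = 0)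
    (p : Pt (Fin 3)) (hgi : fderiv ℝ g p (Pi.single i 1) = 0) :
    curv Γ (cvf (Pi.single i 1)) Z W p i = 0 := by
  set e : Pt (Fin 3) := Pi.single i 1 with he
  have hZd : ∀ j, Differentiable ℝ fun q => Z q j := fun j => (hZ j).differentiable (by simp)
  have hWd : ∀ j, Differentiable ℝ fun q => W q j := fun j => (hW j).differentiable (by simp)
  have hgd : Differentiable ℝ g := hg.differentiable (by simp)
  have hZpi : ContDiff ℝ (⊤ : ℕ∞) (fun q : Pt (Fin 3) => Z q) := contDiff_pi.mpr hZ
  have hdW : ∀ m, ContDiff ℝ (⊤ : ℕ∞) (fderiv ℝ (fun q => W q m)) :=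
    fun m => (hW m).fderiv_right (by simp)
  set v : Pt (Fin 3) := (fun j => fderiv ℝ (fun r => Z r j) p e) with hv
  have hZv : fderiv ℝ (fun q : Pt (Fin 3) => Z q) p e = v := by
    have h := fderiv_pi (𝕜 := ℝ) (φ := fun j q => Z q j) (x := p)
      (fun j => (hZd j).differentiableAt)
    rw [show (fun q : Pt (Fin 3) => Z q) = (fun x j => Z x j) from rfl, h]
    rfl
  have hconnZW : ∀ q, conn Γ Z W q i
      = fderiv ℝ (fun r => W r i) q (Z q) + g q * Z q b * W q b := by
    intro q; simp [conn, hrowi]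
  have hconnEWi : ∀ q, conn Γ (cvf e) W q i = fderiv ℝ (fun r => W r i) q e := by
    intro q; simp [conn, hrowi, cvf, hib]
  have hconnEWb : conn Γ (cvf e) W p b = fderiv ℝ (fun r => W r b) p e := by
    simp [conn, hrowb, cvf, hic]
  have hbr : bracket (cvf e) Z p = v := by
    funext j; simp [bracket, cvf, hv]
  have hT1 : conn Γ (cvf e) (conn Γ Z W) p i
      = (fderiv ℝ (fun r => W r i) p v + fderiv ℝ (fderiv ℝ (fun r => W r i)) p e (Z p))
        + (g p * v b * W p b + g p * Z p b * fderiv ℝ (fun r => W r b) p e) := by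
    have d1 : DifferentiableAt ℝ (fun q => fderiv ℝ (fun r => W r i) q (Z q)) p :=
      (((hdW i).clm_apply hZpi).differentiable (by simp)).differentiableAt
    have d2 : DifferentiableAt ℝ (fun q => g q * Z q b * W q b) p := by fun_prop
    have hprod : fderiv ℝ (fun q => g q * Z q b * W q b) p e
        = g p * v b * W p b + g p * Z p b * fderiv ℝ (fun r => W r b) p e := by
      rw [fderiv_fun_mul (by fun_prop) ((hWd b).differentiableAt),
          fderiv_fun_mul (hgd.differentiableAt) ((hZd b).differentiableAt)]
      simp [hgi, hv]
      ring
    have h0 : conn Γ (cvf e) (conn Γ Z W) p i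
        = fderiv ℝ (fun q => conn Γ Z W q i) p e := by
      simp [conn, hrowi, cvf, hib]
    rw [h0]
    have h1 : (fun q => conn Γ Z W q i)
        = fun q => fderiv ℝ (fun r => W r i) q (Z q) + g q * Z q b * W q b :=
      funext hconnZW
    rw [h1, fderiv_fun_add d1 d2]
    rw [ContinuousLinearMap.add_apply, hprod,
        fderiv_clm_apply (((hdW i).differentiable (by simp)).differentiableAt)
          ((hZpi.differentiable (by simp)).differentiableAt)]
    simp [hZv]
  have hT2 : conn Γ Z (conn Γ (cvf e) W) p i
      = fderiv ℝ (fderiv ℝ (fun r => W r i)) p e (Z p)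
        + g p * Z p b * fderiv ℝ (fun r => W r b) p e := by
    have h0 : conn Γ Z (conn Γ (cvf e) W) p i
        = fderiv ℝ (fun q => conn Γ (cvf e) W q i) p (Z p)
          + g p * Z p b * conn Γ (cvf e) W p b := by
      simp [conn, hrowi]
    rw [h0, hconnEWb]
    have h2 : (fun q => conn Γ (cvf e) W q i)
        = fun q => fderiv ℝ (fun r => W r i) q e := funext hconnEWi
    rw [h2]
    have h3 : fderiv ℝ (fun q => fderiv ℝ (fun r => W r i) q e) p (Z p)
        = fderiv ℝ (fderiv ℝ (fun r => W r i)) p (Z p) e := by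
      rw [fderiv_clm_apply (((hdW i).differentiable (by simp)).differentiableAt)
            (differentiableAt_const e)]
      simp
    rw [h3, ((hW i).contDiffAt.isSymmSndFDerivAt (by simp only [minSmoothness_of_isRCLikeNormedField]; exact WithTop.coe_le_coe.mpr (le_top : (2 : ℕ∞) ≤ ⊤))) (Z p) e]
  have hT3 : conn Γ (bracket (cvf e) Z) W p i
      = fderiv ℝ (fun r => W r i) p v + g p * v b * W p b := by
    simp [conn, hbr, hrowi]
  show (conn Γ (cvf e) (conn Γ Z W) - conn Γ Z (conn Γ (cvf e) W)
      - conn Γ (bracket (cvf e) Z) W) p i = 0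
  simp only [Pi.sub_apply, hT1, hT2, hT3]
  ring

lemma fd1 (p : Pt (Fin 3)) :
    fderiv ℝ (fun q : Pt (Fin 3) => (q 0 : ℝ) ^ 2) p (Pi.single 1 1) = 0 := by
  have h0 : HasFDerivAt (fun q : Pt (Fin 3) => q 0)
      (ContinuousLinearMap.proj 0 : Pt (Fin 3) →L[ℝ] ℝ) p := hasFDerivAt_apply 0 p
  rw [show (fun q : Pt (Fin 3) => (q 0 : ℝ) ^ 2) = fun q => q 0 * q 0 by funext q; ring,
      HasFDerivAt.fderiv (f := fun q : Pt (Fin 3) => q 0 * q 0) (h0.mul h0)]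
  simp [Pi.single_apply]

lemma fd2 (p : Pt (Fin 3)) :
    fderiv ℝ (fun q : Pt (Fin 3) => q 0 + q 1) p (Pi.single 2 1) = 0 := by
  have h0 : HasFDerivAt (fun q : Pt (Fin 3) => q 0)
      (ContinuousLinearMap.proj 0 : Pt (Fin 3) →L[ℝ] ℝ) p := hasFDerivAt_apply 0 p
  have h1 : HasFDerivAt (fun q : Pt (Fin 3) => q 1)
      (ContinuousLinearMap.proj 1 : Pt (Fin 3) →L[ℝ] ℝ) p := hasFDerivAt_apply 1 p
  rw [HasFDerivAt.fderiv (f := fun q : Pt (Fin 3) => q 0 + q 1) (h0.add h1)]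
  simp [Pi.single_apply]

lemma fd3 (p : Pt (Fin 3)) :
    fderiv ℝ (fun q : Pt (Fin 3) => q 1 + (q 2 : ℝ) ^ 2) p (Pi.single 0 1) = 0 := by
  have h1 : HasFDerivAt (fun q : Pt (Fin 3) => q 1)
      (ContinuousLinearMap.proj 1 : Pt (Fin 3) →L[ℝ] ℝ) p := hasFDerivAt_apply 1 p
  have h2 : HasFDerivAt (fun q : Pt (Fin 3) => q 2)
      (ContinuousLinearMap.proj 2 : Pt (Fin 3) →L[ℝ] ℝ) p := hasFDerivAt_apply 2 p
  rw [show (fun q : Pt (Fin 3) => q 1 + (q 2 : ℝ) ^ 2) = fun q => q 1 + q 2 * q 2 by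
        funext q; ring,
      HasFDerivAt.fderiv (f := fun q : Pt (Fin 3) => q 1 + q 2 * q 2) (h1.add (h2.mul h2))]
  simp [Pi.single_apply]

lemma ricci_zero (Z W : VF (Fin 3)) (hZ : SmoothVF Z) (hW : SmoothVF W) (p : Pt (Fin 3)) :
    ricci Gex Z W p = 0 := by
  have h0 := curv_diag_zero Gex Z W hZ hW 0 2 1 _ _ (by fun_prop)
    (gsum0 _ _ _) (gsum2 _ _ _) (by simp [Pi.single_apply]) (by simp [Pi.single_apply]) p (fd3 p)
  have h1 := curv_diag_zero Gex Z W hZ hW 1 0 2 _ _ (by fun_prop)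
    (gsum1 _ _ _) (gsum0 _ _ _) (by simp [Pi.single_apply]) (by simp [Pi.single_apply]) p (fd1 p)
  have h2 := curv_diag_zero Gex Z W hZ hW 2 1 0 _ _ (by fun_prop)
    (gsum2 _ _ _) (gsum1 _ _ _) (by simp [Pi.single_apply]) (by simp [Pi.single_apply]) p (fd2 p)
  simp [ricci, Fin.sum_univ_three, h0, h1, h2]

lemma smooth_conn (X Y : VF (Fin 3)) (hX : SmoothVF X) (hY : SmoothVF Y) :
    SmoothVF (conn Gex X Y) := by
  have hGam : ∀ i j k : Fin 3, ContDiff ℝ (⊤ : ℕ∞) (fun q => Gex q i j k) := by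
    intro i j k
    by_cases h1 : i = 1 ∧ j = 0 ∧ k = 0
    · simp only [gammaB, if_pos h1]; fun_prop
    · by_cases h2 : i = 2 ∧ j = 1 ∧ k = 1
      · simp only [gammaB, if_neg h1, if_pos h2]; fun_prop
      · by_cases h3 : i = 0 ∧ j = 2 ∧ k = 2
        · simp only [gammaB, if_neg h1, if_neg h2, if_pos h3]; fun_prop
        · simp only [gammaB, if_neg h1, if_neg h2, if_neg h3]; fun_prop
  intro i
  have hXpi : ContDiff ℝ (⊤ : ℕ∞) (fun q : Pt (Fin 3) => X q) := contDiff_pi.mpr hX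
  have h1 : ContDiff ℝ (⊤ : ℕ∞) (fun q => fderiv ℝ (fun r => Y r i) q (X q)) :=
    ((hY i).fderiv_right (by simp)).clm_apply hXpi
  have h2 : ContDiff ℝ (⊤ : ℕ∞) (fun q => ∑ j, ∑ k, Gex q i j k * X q j * Y q k) := by
    apply ContDiff.sum; intro j _
    apply ContDiff.sum; intro k _
    exact ((hGam i j k).mul (hX j)).mul (hY k)
  exact h1.add h2

end CyclicAux

/-- The connection `∇_{∂₁}∂₁ = x₁²∂₂`, `∇_{∂₂}∂₂ = (x₁+x₂)∂₃`, `∇_{∂₃}∂₃ = (x₂+x₃²)∂₁`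
has cyclic parallel Ricci tensor. -/
theorem example34_cyclicParallel :
    CyclicParallelRic (gammaB (fun p => (p 0) ^ 2) (fun p => p 0 + p 1)
      (fun p => p 1 + (p 2) ^ 2)) := by
  intro X hX p
  have hconn : SmoothVF (conn (gammaB (fun p => (p 0) ^ 2) (fun p => p 0 + p 1)
      (fun p => p 1 + (p 2) ^ 2)) X X) := smooth_conn X X hX hX
  have hric : ricci (gammaB (fun p => (p 0) ^ 2) (fun p => p 0 + p 1)
      (fun p => p 1 + (p 2) ^ 2)) X X = fun _ => (0:ℝ) :=
    funext fun q => ricci_zero X X hX hX q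
  unfold covRic
  rw [hric, ricci_zero _ _ hconn hX p, ricci_zero _ _ hX hconn p]
  simp


end AffineSzabo
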